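/- Let (X, μ1, μ2) be a generalized bitopological space and let A ⊆ X. The following are equivalent: (i) A is pairwise λ-closed; (ii) A = (F1 ∩ F2) ∩ (A^∧_{μ1} ∩ A^∧_{μ2}) for some μ1-closed set F1 and μ2-closed set F2; (iii) A = (cl_{μ1}(A) ∩ cl_{μ2}(A)) ∩ (L1 ∩ L2) for some ∧_{μ1}-set L1 and ∧_{μ2}-set L2; (iv) A = (cl_{μ1}(A) ∩ cl_{μ2}(A)) ∩ (A^∧_{μ1} ∩ A^∧_{μ2}). -/

import Mathlib

open Set

/-- A generalized topology on `X`: contains `∅` and is closed under arbitrary unions. -/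
def IsGenTop {X : Type*} (μ : Set (Set X)) : Prop :=
  ∅ ∈ μ ∧ ∀ S ⊆ μ, ⋃₀ S ∈ μ

/-- `A` is μ-closed iff its complement is μ-open. -/
def gClosedSet {X : Type*} (μ : Set (Set X)) (A : Set X) : Prop := Aᶜ ∈ μ

/-- μ-closure: intersection of all μ-closed sets containing `A`. -/
def gCl {X : Type*} (μ : Set (Set X)) (A : Set X) : Set X :=
  ⋂₀ {F | gClosedSet μ F ∧ A ⊆ F}

/-- `A^∧_μ`: intersection of all μ-open sets containing `A`. -/
def wedgeOp {X : Type*} (μ : Set (Set X)) (A : Set X) : Set X :=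
  ⋂₀ {U | U ∈ μ ∧ A ⊆ U}

/-- `A^∨_μ`: union of all μ-closed sets contained in `A`. -/
def veeOp {X : Type*} (μ : Set (Set X)) (A : Set X) : Set X :=
  ⋃₀ {F | gClosedSet μ F ∧ F ⊆ A}

/-- `L` is a `∧_μ`-set. -/
def IsWedgeSet {X : Type*} (μ : Set (Set X)) (L : Set X) : Prop := L = wedgeOp μ L

/-- `M` is a `∨_μ`-set. -/
def IsVeeSet {X : Type*} (μ : Set (Set X)) (M : Set X) : Prop := M = veeOp μ M

/-- `A` is `g_{μi}`-closed with respect to `μj`. -/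
def GClosedWrt {X : Type*} (μi μj : Set (Set X)) (A : Set X) : Prop :=
  ∀ U ∈ μj, A ⊆ U → gCl μi A ⊆ U

/-- `A` is `g_{μi}`-open with respect to `μj`. -/
def GOpenWrt {X : Type*} (μi μj : Set (Set X)) (A : Set X) : Prop :=
  GClosedWrt μi μj Aᶜ

/-- `A` is `λ_{μi}`-closed with respect to `μj`. -/
def LamClosedWrt {X : Type*} (μi μj : Set (Set X)) (A : Set X) : Prop :=
  ∃ F L : Set X, gClosedSet μi F ∧ IsWedgeSet μj L ∧ A = F ∩ L

/-- `A` is `λ_{μi}`-open with respect to `μj`. -/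
def LamOpenWrt {X : Type*} (μi μj : Set (Set X)) (A : Set X) : Prop :=
  LamClosedWrt μi μj Aᶜ

/-- `A` is pairwise `λ`-closed. -/
def PairwiseLamClosed {X : Type*} (μ1 μ2 : Set (Set X)) (A : Set X) : Prop :=
  ∃ F1 F2 L1 L2 : Set X, gClosedSet μ1 F1 ∧ gClosedSet μ2 F2 ∧
    IsWedgeSet μ1 L1 ∧ IsWedgeSet μ2 L2 ∧ A = (F1 ∩ F2) ∩ (L1 ∩ L2)

def PairwiseT0 {X : Type*} (μ1 μ2 : Set (Set X)) : Prop :=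
  ∀ x y : X, x ≠ y →
    (∃ U ∈ μ1, x ∈ U ∧ y ∉ U) ∨ (∃ V ∈ μ2, y ∈ V ∧ x ∉ V)

def PairwiseT1 {X : Type*} (μ1 μ2 : Set (Set X)) : Prop :=
  ∀ x y : X, x ≠ y →
    (∃ U ∈ μ1, x ∈ U ∧ y ∉ U) ∧ (∃ V ∈ μ2, y ∈ V ∧ x ∉ V)

def PairwiseSymmetric {X : Type*} (μ1 μ2 : Set (Set X)) : Prop :=
  ∀ x y : X, (x ∈ gCl μ1 {y} → y ∈ gCl μ2 {x}) ∧ (x ∈ gCl μ2 {y} → y ∈ gCl μ1 {x})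

def PairwiseTHalf {X : Type*} (μ1 μ2 : Set (Set X)) : Prop :=
  (∀ A : Set X, GClosedWrt μ1 μ2 A → gClosedSet μ1 A) ∧
  (∀ A : Set X, GClosedWrt μ2 μ1 A → gClosedSet μ2 A)

def PairwiseR0 {X : Type*} (μ1 μ2 : Set (Set X)) : Prop :=
  (∀ G ∈ μ1, ∀ x ∈ G, gCl μ2 {x} ⊆ G) ∧ (∀ G ∈ μ2, ∀ x ∈ G, gCl μ1 {x} ⊆ G)

def PairwiseLamSymmetric {X : Type*} (μ1 μ2 : Set (Set X)) : Prop :=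
  ∀ A : Set X, PairwiseLamClosed μ1 μ2 A →
    LamClosedWrt μ1 μ2 A ∧ LamClosedWrt μ2 μ1 A

/-- `A` and `B` are μ-weakly separated. -/
def MuWeaklySeparated {X : Type*} (μ : Set (Set X)) (A B : Set X) : Prop :=
  ∃ U ∈ μ, ∃ V ∈ μ, A ⊆ U ∧ B ⊆ V ∧ A ∩ V = ∅ ∧ B ∩ U = ∅

def PairwiseTQuarter {X : Type*} (μ1 μ2 : Set (Set X)) : Prop :=
  ∀ P : Set X, P.Finite → ∀ y ∉ P,
    ∃ A : Set X, P ⊆ A ∧ y ∉ A ∧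
      (A ∈ μ1 ∨ A ∈ μ2 ∨ gClosedSet μ1 A ∨ gClosedSet μ2 A)

def PairwiseTThreeEighths {X : Type*} (μ1 μ2 : Set (Set X)) : Prop :=
  ∀ P : Set X, P.Countable → ∀ y ∉ P,
    ∃ A : Set X, P ⊆ A ∧ y ∉ A ∧
      (A ∈ μ1 ∨ A ∈ μ2 ∨ gClosedSet μ1 A ∨ gClosedSet μ2 A)

def PairwiseTFiveEighths {X : Type*} (μ1 μ2 : Set (Set X)) : Prop :=
  ∀ P : Set X, ∀ y ∉ P,
    ∃ A : Set X, P ⊆ A ∧ y ∉ A ∧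
      (A ∈ μ1 ∨ A ∈ μ2 ∨ gClosedSet μ1 A ∨ gClosedSet μ2 A)
/-! `gCl μ A` is the least μ-closed set containing `A` and `wedgeOp μ A` the least `∧_μ`-set
containing `A`. Hence whenever `A = (F1 ∩ F2) ∩ (L1 ∩ L2)`, replacing each `Fi` by `gCl μi A` and
each `Li` by `wedgeOp μi A` only shrinks the right-hand side while keeping it above `A`; so every
one of the four conditions is equivalent to the canonical decomposition (iv). -/

section GeneralizedTopology

variable {X : Type*} {μ μ1 μ2 : Set (Set X)} {A F L U : Set X}

lemma subset_gCl (μ : Set (Set X)) (A : Set X) : A ⊆ gCl μ A :=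
  fun _ hx _ hF => hF.2 hx

lemma gCl_subset (hF : gClosedSet μ F) (hAF : A ⊆ F) : gCl μ A ⊆ F :=
  sInter_subset_of_mem ⟨hF, hAF⟩

lemma gClosedSet_gCl (hμ : IsGenTop μ) (A : Set X) : gClosedSet μ (gCl μ A) := by
  rw [gClosedSet, gCl, compl_sInter]
  refine hμ.2 _ ?_
  rintro _ ⟨F, ⟨hF, -⟩, rfl⟩
  exact hF

lemma subset_wedgeOp (μ : Set (Set X)) (A : Set X) : A ⊆ wedgeOp μ A :=
  fun _ hx _ hU => hU.2 hx

lemma wedgeOp_subset (hU : U ∈ μ) (hAU : A ⊆ U) : wedgeOp μ A ⊆ U :=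
  sInter_subset_of_mem ⟨hU, hAU⟩

lemma wedgeOp_mono (μ : Set (Set X)) {A B : Set X} (hAB : A ⊆ B) :
    wedgeOp μ A ⊆ wedgeOp μ B :=
  fun _ hx U hU => hx U ⟨hU.1, hAB.trans hU.2⟩

lemma isWedgeSet_wedgeOp (μ : Set (Set X)) (A : Set X) : IsWedgeSet μ (wedgeOp μ A) :=
  (subset_wedgeOp μ _).antisymm fun _ hx U hU => hx U ⟨hU.1, wedgeOp_subset hU.1 hU.2⟩

lemma IsWedgeSet.wedgeOp_subset (hL : IsWedgeSet μ L) (hAL : A ⊆ L) : wedgeOp μ A ⊆ L :=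
  hL ▸ wedgeOp_mono μ hAL

lemma PairwiseLamClosed.eq_gCl_inter_wedgeOp (hA : PairwiseLamClosed μ1 μ2 A) :
    A = (gCl μ1 A ∩ gCl μ2 A) ∩ (wedgeOp μ1 A ∩ wedgeOp μ2 A) := by
  obtain ⟨F1, F2, L1, L2, hF1, hF2, hL1, hL2, hA⟩ := hA
  have hAF1 : A ⊆ F1 := hA.trans_subset fun _ hx => hx.1.1
  have hAF2 : A ⊆ F2 := hA.trans_subset fun _ hx => hx.1.2
  have hAL1 : A ⊆ L1 := hA.trans_subset fun _ hx => hx.2.1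
  have hAL2 : A ⊆ L2 := hA.trans_subset fun _ hx => hx.2.2
  refine (subset_inter (subset_inter (subset_gCl _ _) (subset_gCl _ _))
    (subset_inter (subset_wedgeOp _ _) (subset_wedgeOp _ _))).antisymm ?_
  exact (inter_subset_inter (inter_subset_inter (gCl_subset hF1 hAF1) (gCl_subset hF2 hAF2))
    (inter_subset_inter (hL1.wedgeOp_subset hAL1) (hL2.wedgeOp_subset hAL2))).trans hA.symm.subset

lemma pairwiseLamClosed_iff_eq_gCl_inter_wedgeOp (h1 : IsGenTop μ1) (h2 : IsGenTop μ2) :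
    PairwiseLamClosed μ1 μ2 A ↔
      A = (gCl μ1 A ∩ gCl μ2 A) ∩ (wedgeOp μ1 A ∩ wedgeOp μ2 A) :=
  ⟨PairwiseLamClosed.eq_gCl_inter_wedgeOp, fun hA =>
    ⟨_, _, _, _, gClosedSet_gCl h1 A, gClosedSet_gCl h2 A, isWedgeSet_wedgeOp μ1 A,
      isWedgeSet_wedgeOp μ2 A, hA⟩⟩

end GeneralizedTopology

theorem stmt11 {X : Type*} (μ1 μ2 : Set (Set X))
    (h1 : IsGenTop μ1) (h2 : IsGenTop μ2) (A : Set X) :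
    (PairwiseLamClosed μ1 μ2 A ↔
      ∃ F1 F2 : Set X, gClosedSet μ1 F1 ∧ gClosedSet μ2 F2 ∧
        A = (F1 ∩ F2) ∩ (wedgeOp μ1 A ∩ wedgeOp μ2 A)) ∧
    (PairwiseLamClosed μ1 μ2 A ↔
      ∃ L1 L2 : Set X, IsWedgeSet μ1 L1 ∧ IsWedgeSet μ2 L2 ∧
        A = (gCl μ1 A ∩ gCl μ2 A) ∩ (L1 ∩ L2)) ∧
    (PairwiseLamClosed μ1 μ2 A ↔
      A = (gCl μ1 A ∩ gCl μ2 A) ∩ (wedgeOp μ1 A ∩ wedgeOp μ2 A)) := by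
  have key := pairwiseLamClosed_iff_eq_gCl_inter_wedgeOp (A := A) h1 h2
  refine ⟨⟨fun hA => ?_, ?_⟩, ⟨fun hA => ?_, ?_⟩, key⟩
  · exact ⟨_, _, gClosedSet_gCl h1 A, gClosedSet_gCl h2 A, key.mp hA⟩
  · rintro ⟨F1, F2, hF1, hF2, hA⟩
    exact ⟨_, _, _, _, hF1, hF2, isWedgeSet_wedgeOp μ1 A, isWedgeSet_wedgeOp μ2 A, hA⟩
  · exact ⟨_, _, isWedgeSet_wedgeOp μ1 A, isWedgeSet_wedgeOp μ2 A, key.mp hA⟩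
  · rintro ⟨L1, L2, hL1, hL2, hA⟩
    exact ⟨_, _, _, _, gClosedSet_gCl h1 A, gClosedSet_gCl h2 A, hL1, hL2, hA⟩
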